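/- (Theorem 2) Let D be a probability distribution on ℝ^d × {1,…,c} that is (k_1,…,k_n)-separable with δ-margin, let f : {1,…,c} → ℝ^m be injective, and let ε > 0. Then there exist, for each s ∈ {1,…,n}, a scaling factor c^{(s)} > 0, a unit vector a_s ∈ ℝ^d, boundaries b_{s,1}, …, b_{s,k_s} ∈ ℝ, and weights W^{(s)} ∈ ℝ^{k_s}, together with K = ∏_{s=1}^{n} k_s, a scaling factor c′ > 0, boundaries β_1, …, β_K ∈ ℝ, and a weight matrix W′ ∈ ℝ^{K×m}, such that the 4-layer sigmoid network g : ℝ^d → ℝ^m defined by p^s(x) = Σ_{l=1}^{k_s} W^{(s)}_l · ρ(c^{(s)}(a_sᵀx - b_{s,l})) and g_j(x) = Σ_{l=1}^{K} W′_{l,j} · ρ(c′((1/√n)·Σ_{s=1}^{n} p^s(x) - β_l)) satisfies P_{(x,y)∼D}( max_{1≤j≤m} |g_j(x) - f_j(y)| > ε ) = 0. -/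

import Mathlib

open RealInnerProductSpace MeasureTheory

/-- The sigmoid function `ρ(t) = 1 / (1 + e^{-t})`. -/
noncomputable def sigmoid (t : ℝ) : ℝ := 1 / (1 + Real.exp (-t))

/-- A distribution `μ` on `ℝ^d × {1,…,c}` is `(k_1,…,k_n)`-separable with `δ`-margin:
there exist unit projection vectors `a_1,…,a_n` and boundaries
`b_{s,1} < ⋯ < b_{s,k_s+1}` such that each region
`X_𝐢 = {x : ∀ s, b_{s,i_s} + δ < a_sᵀx < b_{s,i_s+1} - δ}` carries a single label
almost surely, and the union of the regions has full measure. -/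
def IsMultiSeparable {d c : ℕ} {n : ℕ} (k : Fin n → ℕ)
    (μ : Measure (EuclideanSpace ℝ (Fin d) × Fin c)) (δ : ℝ) : Prop :=
  0 < δ ∧
  ∃ (a : Fin n → EuclideanSpace ℝ (Fin d)) (b : ∀ s : Fin n, Fin (k s + 1) → ℝ),
    (∀ s, ‖a s‖ = 1) ∧ (∀ s, StrictMono (b s)) ∧
    (∀ I : ∀ s : Fin n, Fin (k s), ∃ yI : Fin c,
      μ {p | (∀ s, b s (I s).castSucc + δ < ⟪a s, p.1⟫ ∧ ⟪a s, p.1⟫ < b s (I s).succ - δ)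
              ∧ p.2 = yI}
        = μ {p | ∀ s, b s (I s).castSucc + δ < ⟪a s, p.1⟫ ∧
              ⟪a s, p.1⟫ < b s (I s).succ - δ}) ∧
    μ {p | ∃ I : ∀ s : Fin n, Fin (k s),
      ∀ s, b s (I s).castSucc + δ < ⟪a s, p.1⟫ ∧ ⟪a s, p.1⟫ < b s (I s).succ - δ} = 1

/-!
On the region `X_𝐢`, each block `p^s` is a sum of `k_s` steep sigmoids with thresholds at the
boundaries `b_{s,l}` and equal weights `√n B^s`, so it counts `i_s + 1` steps: `(1/√n) Σ_s p^s(x)`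
is within `1/4` of the integer `Σ_s (i_s + 1) B^s`, whose base-`B` digits identify `𝐢`. The output
layer is a staircase with one steep sigmoid halfway below each of the `K` codes and telescoping
weights, so the steps up to the code of `X_𝐢` add up to `f(y_𝐢)`. The margin `δ` and the integer
spacing of the codes allow both scales to be taken so large that every sigmoid is within any
prescribed error of a step.
-/

open Finset Filter Topology

lemma sigmoid_eq_real_sigmoid : sigmoid = Real.sigmoid :=
  funext fun _ => one_div _

lemma Real.sigmoid_le_exp (t : ℝ) : Real.sigmoid t ≤ Real.exp t := by
  have h := Real.sigmoid_mul_rexp_neg (-t)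
  rw [neg_neg] at h
  rw [← h]
  exact mul_le_of_le_one_left (Real.exp_pos t).le (Real.sigmoid_le_one _)

lemma Real.abs_sigmoid_le_exp_neg {t M : ℝ} (h : t ≤ -M) : |Real.sigmoid t| ≤ Real.exp (-M) := by
  rw [abs_of_nonneg (Real.sigmoid_nonneg t)]
  exact (Real.sigmoid_le_exp t).trans (Real.exp_le_exp.mpr h)

lemma Real.abs_sigmoid_sub_one_le_exp_neg {t M : ℝ} (h : M ≤ t) :
    |Real.sigmoid t - 1| ≤ Real.exp (-M) := by
  rw [abs_sub_comm, abs_of_nonneg (sub_nonneg.mpr (Real.sigmoid_le_one t)), ← Real.sigmoid_neg]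
  exact (Real.sigmoid_le_exp _).trans (Real.exp_le_exp.mpr (neg_le_neg h))

lemma abs_sum_mul_sigmoid_sub_sum_le {ι : Type*} [Fintype ι] (w z : ι → ℝ) (S : Finset ι)
    {M : ℝ} (hS : ∀ l ∈ S, M ≤ z l) (hSc : ∀ l ∉ S, z l ≤ -M) :
    |∑ l, w l * sigmoid (z l) - ∑ l ∈ S, w l| ≤ (∑ l, |w l|) * Real.exp (-M) := by
  classical
  have hS_sum : ∑ l ∈ S, w l = ∑ l, w l * if l ∈ S then 1 else 0 := by
    simp [mul_ite, sum_ite_mem]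
  rw [hS_sum, ← sum_sub_distrib, sum_mul]
  refine (abs_sum_le_sum_abs _ _).trans (sum_le_sum fun l _ => ?_)
  rw [← mul_sub, abs_mul, sigmoid_eq_real_sigmoid]
  gcongr
  split_ifs with hl
  · exact Real.abs_sigmoid_sub_one_le_exp_neg (hS l hl)
  · simpa using Real.abs_sigmoid_le_exp_neg (hSc l hl)

lemma exists_pos_mul_exp_neg_lt (A : ℝ) {δ η : ℝ} (hδ : 0 < δ) (hη : 0 < η) :
    ∃ c > 0, A * Real.exp (-(c * δ)) < η := by
  have h : Tendsto (fun c => A * Real.exp (-(c * δ))) atTop (𝓝 0) := by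
    simpa using (Real.tendsto_exp_neg_atTop_nhds_zero.comp
      (tendsto_id.atTop_mul_const hδ)).const_mul A
  exact ((eventually_gt_atTop 0).and (h.eventually (gt_mem_nhds hη))).exists

lemma abs_sum_sigmoid_sub_le_of_mem_gap {k : ℕ} {b : Fin (k + 1) → ℝ} (hb : StrictMono b)
    {i : Fin k} {t δ c : ℝ} (hc : 0 ≤ c) (ht : b i.castSucc + δ < t ∧ t < b i.succ - δ) (w : ℝ) :
    |∑ l : Fin k, w * sigmoid (c * (t - b l.castSucc)) - ((i : ℕ) + 1 : ℕ) * w|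
      ≤ k * |w| * Real.exp (-(c * δ)) := by
  have h := abs_sum_mul_sigmoid_sub_sum_le (fun _ => w) (fun l => c * (t - b l.castSucc))
    (Finset.Iic i) (M := c * δ) (fun l hl => ?_) (fun l hl => ?_)
  · simpa [Fin.card_Iic, mul_assoc] using h
  · have : b l.castSucc ≤ b i.castSucc := hb.monotone (by simpa using hl)
    gcongr
    linarith
  · have : b i.succ ≤ b l.castSucc := hb.monotone (Fin.succ_le_castSucc_iff.mpr (by simpa using hl))
    rw [← mul_neg]
    gcongr
    linarith

def digitCode (B : ℕ) {n : ℕ} {k : Fin n → ℕ} (I : ∀ s, Fin (k s)) : ℕ :=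
  ∑ s, ((I s : ℕ) + 1) * B ^ (s : ℕ)

lemma digitCode_injective {B n : ℕ} {k : Fin n → ℕ} (hB : ∀ s, k s < B) :
    Function.Injective (digitCode B (k := k)) := by
  let digits (I : ∀ s, Fin (k s)) : Fin n → Fin B := fun s => ⟨I s + 1, by have := hB s; omega⟩
  have hcode : ∀ I, digitCode B I = finFunctionFinEquiv (digits I) := fun I => by
    rw [finFunctionFinEquiv_apply]; rfl
  intro I J hIJ
  have h : digits I = digits J :=
    finFunctionFinEquiv.injective (Fin.ext (by rw [← hcode, ← hcode, hIJ]))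
  funext s
  have := congrArg Fin.val (congrFun h s)
  exact Fin.ext (by simpa [digits] using this)

lemma exists_scale_abs_sum_sigmoid_sub_digitCode_le {n : ℕ} {k : Fin n → ℕ} (B : ℕ)
    {b : ∀ s, Fin (k s + 1) → ℝ} (hb : ∀ s, StrictMono (b s)) {δ η : ℝ} (hδ : 0 < δ)
    (hη : 0 < η) :
    ∃ c > 0, ∀ (I : ∀ s, Fin (k s)) (t : Fin n → ℝ),
      (∀ s, b s (I s).castSucc + δ < t s ∧ t s < b s (I s).succ - δ) →
      |∑ s, ∑ l : Fin (k s), (B : ℝ) ^ (s : ℕ) * sigmoid (c * (t s - b s l.castSucc))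
        - digitCode B I| ≤ η := by
  obtain ⟨c, hc, hcη⟩ := exists_pos_mul_exp_neg_lt (∑ s, (k s : ℝ) * B ^ (s : ℕ)) hδ hη
  refine ⟨c, hc, fun I t ht => ?_⟩
  calc |∑ s, ∑ l : Fin (k s), (B : ℝ) ^ (s : ℕ) * sigmoid (c * (t s - b s l.castSucc))
        - digitCode B I|
      = |∑ s, (∑ l : Fin (k s), (B : ℝ) ^ (s : ℕ) * sigmoid (c * (t s - b s l.castSucc))
          - ((I s : ℕ) + 1 : ℕ) * (B : ℝ) ^ (s : ℕ))| := by
        simp [digitCode, sum_sub_distrib]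
    _ ≤ ∑ s, (k s : ℝ) * |(B : ℝ) ^ (s : ℕ)| * Real.exp (-(c * δ)) :=
        (abs_sum_le_sum_abs _ _).trans (sum_le_sum fun s _ =>
          abs_sum_sigmoid_sub_le_of_mem_gap (hb s) hc.le (ht s) _)
    _ = (∑ s, (k s : ℝ) * B ^ (s : ℕ)) * Real.exp (-(c * δ)) := by
        simp [sum_mul]
    _ ≤ η := hcη.le

lemma exists_staircase_network {K m : ℕ} (V : Finset ℕ) (hV : #V = K) (t : ℕ → Fin m → ℝ)
    {ε : ℝ} (hε : 0 < ε) :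
    ∃ c' > 0, ∃ (β : Fin K → ℝ) (W' : Matrix (Fin K) (Fin m) ℝ), ∀ v ∈ V, ∀ q : ℝ,
      |q - v| ≤ 1 / 4 → ∀ j, |∑ l, W' l j * sigmoid (c' * (q - β l)) - t v j| ≤ ε := by
  let e := V.orderIsoOfFin hV
  let tsorted (j : Fin m) : Fin (K + 1) → ℝ := Fin.cons 0 fun r => t (e r) j
  let W' : Matrix (Fin K) (Fin m) ℝ :=
    Matrix.of fun l j => tsorted j l.succ - tsorted j l.castSucc
  have hW' : ∀ r j, ∑ l ∈ Finset.Iic r, W' l j = t (e r) j := fun r j => by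
    simp only [W', Matrix.of_apply]
    rw [Fin.sum_Iic_sub]
    simp [tsorted]
  obtain ⟨c', hc', hc'ε⟩ :=
    exists_pos_mul_exp_neg_lt (∑ l, ∑ j, |W' l j|) (by norm_num : (0 : ℝ) < 1 / 4) hε
  refine ⟨c', hc', fun l => (e l : ℕ) - 1 / 2, W', fun v hv q hq j => ?_⟩
  obtain ⟨r, hr⟩ : ∃ r, (e r : ℕ) = v := ⟨e.symm ⟨v, hv⟩, by simp⟩
  have hq' := abs_le.mp hq
  have h := abs_sum_mul_sigmoid_sub_sum_le (fun l => W' l j)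
    (fun l => c' * (q - ((e l : ℕ) - 1 / 2))) (Finset.Iic r) (M := c' * (1 / 4))
    (fun l hl => ?_) (fun l hl => ?_)
  · rw [hW', hr] at h
    refine h.trans ((mul_le_mul_of_nonneg_right ?_ (Real.exp_pos _).le).trans hc'ε.le)
    exact sum_le_sum fun l _ => single_le_sum (f := fun j => |W' l j|)
      (fun _ _ => abs_nonneg _) (mem_univ j)
  · have : ((e l : ℕ) : ℝ) ≤ v := by
      rw [← hr]; exact_mod_cast e.monotone (mem_Iic.mp hl)
    gcongr
    linarith
  · have : (v : ℝ) + 1 ≤ (e l : ℕ) := by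
      rw [← hr]; exact_mod_cast e.strictMono (not_le.mp (mt mem_Iic.mpr hl))
    rw [← mul_neg]
    gcongr
    linarith

lemma ae_exists_mem_and_mem_of_measure_inter_eq {Ω ι : Type*} [MeasurableSpace Ω] [Countable ι]
    {μ : Measure Ω} [IsProbabilityMeasure μ] {R L : ι → Set Ω}
    (hRL : ∀ i, NullMeasurableSet (R i ∩ L i) μ) (hmeas : ∀ i, μ (R i ∩ L i) = μ (R i))
    (hcover : μ (⋃ i, R i) = 1) :
    ∀ᵐ p ∂μ, ∃ i, p ∈ R i ∧ p ∈ L i := by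
  have h : ∀ i, (R i ∩ L i : Set Ω) =ᵐ[μ] R i := fun i =>
    ae_eq_of_subset_of_measure_ge Set.inter_subset_left (hmeas i).ge (hRL i) (measure_ne_top _ _)
  have hfull : μ (⋃ i, R i ∩ L i) = μ Set.univ := by
    rw [measure_congr (Filter.EventuallyEq.countable_iUnion h), hcover, measure_univ]
  simpa using (ae_mem_iff_measure_eq (NullMeasurableSet.iUnion hRL)).mpr hfull

lemma one_div_sqrt_mul_sum_sum_sqrt_mul {n : ℕ} {κ : Fin n → Type*} [∀ s, Fintype (κ s)]
    (w g : ∀ s, κ s → ℝ) :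
    1 / √n * ∑ s, ∑ l, √n * w s l * g s l = ∑ s, ∑ l, w s l * g s l := by
  rcases n.eq_zero_or_pos with rfl | hn
  · simp
  · simp_rw [mul_assoc, ← mul_sum]
    rw [← mul_assoc, one_div_mul_cancel (by positivity), one_mul]

lemma IsMultiSeparable.ae_exists_region_label {d c n : ℕ} {k : Fin n → ℕ}
    {μ : Measure (EuclideanSpace ℝ (Fin d) × Fin c)} [IsProbabilityMeasure μ] {δ : ℝ}
    (hsep : IsMultiSeparable k μ δ) :
    ∃ (a : Fin n → EuclideanSpace ℝ (Fin d)) (b : ∀ s : Fin n, Fin (k s + 1) → ℝ)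
      (y : (∀ s : Fin n, Fin (k s)) → Fin c),
      (∀ s, ‖a s‖ = 1) ∧ (∀ s, StrictMono (b s)) ∧
      ∀ᵐ p ∂μ, ∃ I : ∀ s : Fin n, Fin (k s),
        (∀ s, b s (I s).castSucc + δ < ⟪a s, p.1⟫ ∧ ⟪a s, p.1⟫ < b s (I s).succ - δ) ∧
          p.2 = y I := by
  obtain ⟨-, a, b, ha, hb, hlabel, hcover⟩ := hsep
  choose y hy using hlabel
  let region (I : ∀ s, Fin (k s)) : Set (EuclideanSpace ℝ (Fin d) × Fin c) :=
    {p | ∀ s, b s (I s).castSucc + δ < ⟪a s, p.1⟫ ∧ ⟪a s, p.1⟫ < b s (I s).succ - δ}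
  have hregion (I) : MeasurableSet (region I) := by
    simp only [region, Set.ofPred_forall, Set.ofPred_and]
    exact .iInter fun s => (measurableSet_lt measurable_const (by fun_prop)).inter
      (measurableSet_lt (by fun_prop) measurable_const)
  rw [Set.ofPred_exists] at hcover
  exact ⟨a, b, y, ha, hb, ae_exists_mem_and_mem_of_measure_inter_eq (R := region)
    (L := fun I => {p | p.2 = y I})
    (fun I => ((hregion I).inter (measurable_snd (measurableSet_singleton _))).nullMeasurableSet)
    hy hcover⟩

theorem four_layer_network_perfect_fit_general {d c m : ℕ} {n : ℕ}
    (k : Fin n → ℕ)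
    (μ : Measure (EuclideanSpace ℝ (Fin d) × Fin c)) [IsProbabilityMeasure μ]
    (δ : ℝ) (hsep : IsMultiSeparable k μ δ)
    (f : Fin c → Fin m → ℝ)
    (ε : ℝ) (hε : 0 < ε) :
    ∃ (cS : Fin n → ℝ) (a : Fin n → EuclideanSpace ℝ (Fin d))
      (b : ∀ s : Fin n, Fin (k s) → ℝ) (W : ∀ s : Fin n, Fin (k s) → ℝ)
      (c' : ℝ) (β : Fin (∏ s : Fin n, k s) → ℝ)
      (W' : Matrix (Fin (∏ s : Fin n, k s)) (Fin m) ℝ),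
      (∀ s, 0 < cS s) ∧ (∀ s, ‖a s‖ = 1) ∧ 0 < c' ∧
      μ {p | ∃ j : Fin m, ε <
        |(∑ l : Fin (∏ s : Fin n, k s), W' l j *
            sigmoid (c' * ((1 / Real.sqrt n) *
              (∑ s : Fin n, ∑ l' : Fin (k s),
                W s l' * sigmoid (cS s * (⟪a s, p.1⟫ - b s l'))) - β l)))
          - f p.2 j|} = 0 := by
  obtain ⟨a, b, y, ha, hb, hae⟩ := hsep.ae_exists_region_label
  set B := univ.sup k + 1
  have hB : ∀ s, k s < B := fun s => Nat.lt_succ_of_le (le_sup (mem_univ s))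
  obtain ⟨c0, hc0, hcode⟩ :=
    exists_scale_abs_sum_sigmoid_sub_digitCode_le B hb hsep.1 (by norm_num : (0 : ℝ) < 1 / 4)
  obtain ⟨c', hc', β, W', hW'⟩ := exists_staircase_network (univ.image (digitCode B))
    (K := ∏ s, k s) (by rw [card_image_of_injective _ (digitCode_injective hB)]; simp)
    (Function.extend (digitCode B) (fun I => f (y I)) 0) hε
  refine ⟨fun _ => c0, a, fun s l => b s l.castSucc, fun s _ => √n * B ^ (s : ℕ), c', β, W',
    fun _ => hc0, ha, hc', measure_mono_null ?_ (ae_iff.mp hae)⟩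
  rintro p ⟨j, hj⟩ ⟨I, hI, hpI⟩
  have hfit := hW' _ (mem_image_of_mem _ (mem_univ I)) _ (hcode I (fun s => ⟪a s, p.1⟫) hI) j
  rw [(digitCode_injective hB).extend_apply, ← hpI] at hfit
  simp only [one_div_sqrt_mul_sum_sum_sqrt_mul] at hj
  exact hfit.not_gt hj

/-- **Theorem 2.** If the distribution `μ` on `ℝ^d × {1,…,c}` is
`(k_1,…,k_n)`-separable with `δ`-margin, `f : {1,…,c} → ℝ^m` is injective and
`ε > 0`, then there is a 4-layer sigmoid network
`g_j(x) = Σ_l W'_{l,j} ρ(c'((1/√n) Σ_s p^s(x) - β_l))` with subnetworks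
`p^s(x) = Σ_l W^{(s)}_l ρ(c^{(s)}(a_sᵀx - b_{s,l}))` whose output is within `ε` of
`f(y)` in every coordinate, almost surely over `(x,y) ∼ μ`. -/
theorem four_layer_network_perfect_fit {d c m : ℕ} {n : ℕ} (hn : 1 ≤ n)
    (k : Fin n → ℕ) (hk : ∀ s, 0 < k s)
    (μ : Measure (EuclideanSpace ℝ (Fin d) × Fin c)) [IsProbabilityMeasure μ]
    (δ : ℝ) (hsep : IsMultiSeparable k μ δ)
    (f : Fin c → Fin m → ℝ) (hf : Function.Injective f)
    (ε : ℝ) (hε : 0 < ε) :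
    ∃ (cS : Fin n → ℝ) (a : Fin n → EuclideanSpace ℝ (Fin d))
      (b : ∀ s : Fin n, Fin (k s) → ℝ) (W : ∀ s : Fin n, Fin (k s) → ℝ)
      (c' : ℝ) (β : Fin (∏ s : Fin n, k s) → ℝ)
      (W' : Matrix (Fin (∏ s : Fin n, k s)) (Fin m) ℝ),
      (∀ s, 0 < cS s) ∧ (∀ s, ‖a s‖ = 1) ∧ 0 < c' ∧
      μ {p | ∃ j : Fin m, ε <
        |(∑ l : Fin (∏ s : Fin n, k s), W' l j *
            sigmoid (c' * ((1 / Real.sqrt n) *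
              (∑ s : Fin n, ∑ l' : Fin (k s),
                W s l' * sigmoid (cS s * (⟪a s, p.1⟫ - b s l'))) - β l)))
          - f p.2 j|} = 0 :=
  four_layer_network_perfect_fit_general k μ δ hsep f ε hε
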